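/- arXiv:2003.04667 — 6 statements merged into one kernel-verified Lean document; each statement's English description precedes it below -/
import Mathlib

section
/- The number arccos(1/3)/π is irrational. -/
open Real

private def nivenSeq : ℕ → ℤ
  | 0 => 1
  | 1 => 1
  | (n+2) => 2 * nivenSeq (n+1) - 9 * nivenSeq n

private lemma nivenSeq_cos {θ : ℝ} (hθ : Real.cos θ = 1/3) :
    ∀ n : ℕ, (nivenSeq n : ℝ) = 3 ^ n * Real.cos (n * θ) := by
  intro n
  induction n using Nat.twoStepInduction with
  | zero => simp [nivenSeq]
  | one => simp [nivenSeq, hθ]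
  | more n ih1 ih2 =>
    show ((2 * nivenSeq (n+1) - 9 * nivenSeq n : ℤ) : ℝ) = 3 ^ (n+2) * Real.cos (((n+2 : ℕ)) * θ)
    push_cast at ih1 ih2 ⊢
    rw [ih1, ih2]
    have key : Real.cos (((n:ℝ)+2) * θ) + Real.cos ((n:ℝ) * θ)
        = 2 * Real.cos (((n:ℝ)+1) * θ) * Real.cos θ := by
      have h1 : ((n:ℝ)+2) * θ = ((n:ℝ)+1) * θ + θ := by ring
      have h2 : ((n:ℝ)) * θ = ((n:ℝ)+1) * θ - θ := by ring
      rw [h1, h2, Real.cos_add, Real.cos_sub]; ring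
    have hc : Real.cos (((n:ℝ)+2) * θ)
        = 2 * Real.cos (((n:ℝ)+1) * θ) * (1/3) - Real.cos ((n:ℝ) * θ) := by
      rw [← hθ]; linarith
    rw [hc]; ring

private lemma nivenSeq_not_dvd : ∀ n : ℕ, ¬ (3 : ℤ) ∣ nivenSeq (n + 1) := by
  intro n
  induction n with
  | zero => decide
  | succ n ih =>
    intro h
    have h9 : (3 : ℤ) ∣ 9 * nivenSeq n := ⟨3 * nivenSeq n, by ring⟩
    obtain ⟨k, hk⟩ := h
    have e : nivenSeq (n + 1 + 1) = 2 * nivenSeq (n+1) - 9 * nivenSeq n := rfl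
    have h2 : (3 : ℤ) ∣ 2 * nivenSeq (n + 1) := ⟨k + 3 * nivenSeq n, by omega⟩
    rcases Int.prime_three.dvd_mul.mp h2 with h | h
    · norm_num at h
    · exact ih h

theorem arccos_one_third_div_pi_irrational :
    Irrational (Real.arccos (1/3) / Real.pi) := by
  set θ := Real.arccos (1/3) with hθdef
  have hcos : Real.cos θ = 1/3 := Real.cos_arccos (by norm_num) (by norm_num)
  rintro ⟨q, hq⟩
  have hpi : Real.pi ≠ 0 := Real.pi_ne_zero
  have hθ : θ = (q : ℝ) * Real.pi := by
    field_simp at hq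
    linarith [hq]
  set d := q.den with hd
  have hd1 : 1 ≤ d := q.pos
  have hdq : (d : ℝ) * (q : ℝ) = (q.num : ℝ) := by
    rw_mod_cast [mul_comm]
    exact_mod_cast congrArg (Rat.cast : ℚ → ℝ) (Rat.mul_den_eq_num q)
  have hdθ : (d : ℝ) * θ = (q.num : ℝ) * Real.pi := by
    rw [hθ, ← mul_assoc, hdq]
  have habs : |Real.cos ((d : ℕ) * θ)| = 1 := by
    rw [hdθ]; exact Real.abs_cos_int_mul_pi q.num
  have hval : (nivenSeq d : ℝ) = 3 ^ d * Real.cos ((d : ℕ) * θ) := nivenSeq_cos hcos d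
  have habs2 : |(nivenSeq d : ℝ)| = 3 ^ d := by
    rw [hval, abs_mul, habs, mul_one, abs_of_pos (by positivity)]
  have habs3 : (nivenSeq d).natAbs = 3 ^ d := by
    have : ((nivenSeq d).natAbs : ℝ) = ((3 ^ d : ℕ) : ℝ) := by
      push_cast [Nat.cast_natAbs]
      exact habs2
    exact_mod_cast this
  have hdvd : (3 : ℤ) ∣ nivenSeq d := by
    have : (3 : ℤ) ∣ (nivenSeq d).natAbs := by
      rw [habs3]
      exact_mod_cast dvd_pow_self 3 (by omega : d ≠ 0)
    exact Int.dvd_natAbs.mp this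
  obtain ⟨m, hm⟩ : ∃ m, d = m + 1 := ⟨d - 1, by omega⟩
  rw [hm] at hdvd
  exact nivenSeq_not_dvd m hdvd
end

section
/- The dihedral angles of the tetrahedron T2 with vertices (0,0,0), (2,2,-1), (2,-1,2), (1,-2,-2) equal π/2 at the three edges incident to the origin, and equal arccos(√3/3) = (π − arccos(1/3))/2 at the three remaining edges. -/
open Real MeasureTheory
noncomputable section
abbrev E3 := EuclideanSpace ℝ (Fin 3)
/-- The point (a,b,c) in Euclidean 3-space. -/
def pt (a b c : ℝ) : E3 := WithLp.toLp 2 ![a, b, c]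
/-- Dihedral angle of the tetrahedron `conv {a,b,c,d}` at the edge `[a,b]`:
the angle between the components of `c - a` and `d - a` orthogonal to `b - a`. -/
def dihedral (a b c d : E3) : ℝ :=
  InnerProductGeometry.angle
    ((c - a) - ((inner ℝ (c - a) (b - a) : ℝ) / (inner ℝ (b - a) (b - a) : ℝ)) • (b - a))
    ((d - a) - ((inner ℝ (d - a) (b - a) : ℝ) / (inner ℝ (b - a) (b - a) : ℝ)) • (b - a))

/-! The edge vectors `(2,2,-1)`, `(2,-1,2)`, `(1,-2,-2)` of `T2` at the origin are pairwise
orthogonal of common length `3`, so `T2` is the corner of a cube cut off by the plane through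
three neighbours of a vertex. At an edge through the corner the two faces are coordinate planes
of this orthogonal frame, hence perpendicular. At an edge `[u, v]` of the opposite face, the
components orthogonal to `v - u` of `-u` and `w - u` are `-(u + v)/2` and `w - (u + v)/2`,
with inner product `r²/2` and squared lengths `r²/2` and `3r²/2`, so the cosine is `1/√3`.
Finally `2 arccos (√3/3) = arccos (-1/3)` by the double angle formula. -/

open InnerProductGeometry RealInnerProductSpace

theorem two_mul_arccos {x : ℝ} (h₀ : 0 ≤ x) (h₁ : x ≤ 1) :
    2 * arccos x = arccos (2 * x ^ 2 - 1) := by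
  have hθ₀ := arccos_nonneg x
  have hθ₁ : arccos x ≤ π / 2 := arccos_le_pi_div_two.2 h₀
  calc 2 * arccos x = arccos (cos (2 * arccos x)) :=
        (arccos_cos (by linarith) (by linarith)).symm
    _ = arccos (2 * x ^ 2 - 1) := by rw [cos_two_mul, cos_arccos (by linarith) h₁]

theorem arccos_sqrt_three_div_three : arccos (√3 / 3) = (π - arccos (1 / 3)) / 2 := by
  have h3 : √3 ^ 2 = (3 : ℝ) := sq_sqrt zero_le_three
  have h := two_mul_arccos (x := √3 / 3) (by positivity) (by nlinarith [sqrt_nonneg 3])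
  rw [div_pow, h3, show 2 * (3 / 3 ^ 2) - 1 = -(1 / 3 : ℝ) by norm_num, arccos_neg] at h
  linarith

theorem dihedral_zero_of_orthogonal {u v w : E3} (huv : ⟪u, v⟫ = 0) (huw : ⟪u, w⟫ = 0)
    (hvw : ⟪v, w⟫ = 0) : dihedral 0 u v w = π / 2 := by
  simp only [dihedral, sub_zero, real_inner_comm u, huv, huw, zero_div, zero_smul]
  exact (inner_eq_zero_iff_angle_eq_pi_div_two v w).1 hvw

theorem dihedral_of_orthogonal_of_norm_eq {u v w : E3} {r : ℝ} (huv : ⟪u, v⟫ = 0)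
    (huw : ⟪u, w⟫ = 0) (hvw : ⟪v, w⟫ = 0) (hu : ‖u‖ = r) (hv : ‖v‖ = r) (hw : ‖w‖ = r)
    (hr : r ≠ 0) : dihedral u v 0 w = arccos (√3 / 3) := by
  have hvu : ⟪v, u⟫ = 0 := by rw [real_inner_comm]; exact huv
  have hwu : ⟪w, u⟫ = 0 := by rw [real_inner_comm]; exact huw
  have hwv : ⟪w, v⟫ = 0 := by rw [real_inner_comm]; exact hvw
  have hcoef₁ : ⟪(0 : E3) - u, v - u⟫ / ⟪v - u, v - u⟫ = 1 / 2 := by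
    simp only [inner_sub_left, inner_sub_right, real_inner_self_eq_norm_sq, inner_zero_left,
      hu, hv, huv, hvu]
    field_simp; ring
  have hcoef₂ : ⟪w - u, v - u⟫ / ⟪v - u, v - u⟫ = 1 / 2 := by
    simp only [inner_sub_left, inner_sub_right, real_inner_self_eq_norm_sq, hu, hv, huv, hvu,
      hwu, hwv]
    field_simp; ring
  rw [dihedral, hcoef₁, hcoef₂, angle]
  set x : E3 := 0 - u - (1 / 2 : ℝ) • (v - u)
  set y : E3 := w - u - (1 / 2 : ℝ) • (v - u)
  have hxy : ⟪x, y⟫ = r ^ 2 / 2 := by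
    simp only [x, y, inner_sub_left, inner_sub_right, inner_smul_left, inner_smul_right,
      inner_zero_left, real_inner_self_eq_norm_sq, hu, hv, huv, hvu, huw, hvw, RCLike.conj_to_real]
    ring
  have hxx : ‖x‖ ^ 2 = r ^ 2 / 2 := by
    rw [← real_inner_self_eq_norm_sq]
    simp only [x, inner_sub_left, inner_sub_right, inner_smul_left, inner_smul_right,
      inner_zero_left, inner_zero_right, real_inner_self_eq_norm_sq, hu, hv, huv, hvu,
      RCLike.conj_to_real]
    ring
  have hyy : ‖y‖ ^ 2 = 3 * r ^ 2 / 2 := by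
    rw [← real_inner_self_eq_norm_sq]
    simp only [y, inner_sub_left, inner_sub_right, inner_smul_left, inner_smul_right,
      real_inner_self_eq_norm_sq, hu, hv, hw, huv, hvu, huw, hwu, hvw, hwv, RCLike.conj_to_real]
    ring
  have hnorm : ‖x‖ * ‖y‖ = √3 * (r ^ 2 / 2) := by
    rw [← pow_left_inj₀ (by positivity) (by positivity) two_ne_zero, mul_pow, mul_pow, hxx, hyy,
      sq_sqrt zero_le_three]
    ring
  rw [hxy, hnorm, div_mul_cancel_right₀ (by positivity)]
  congr 1
  field_simp
  norm_num

theorem pt_zero : pt 0 0 0 = 0 := by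
  ext i; fin_cases i <;> rfl

theorem inner_pt (a b c d e f : ℝ) : ⟪pt a b c, pt d e f⟫ = a * d + b * e + c * f := by
  simp only [pt, PiLp.inner_apply, RCLike.inner_apply, ringHom_apply, Fin.sum_univ_three,
    Matrix.cons_val_zero, Matrix.cons_val_one, Matrix.cons_val]
  ring

theorem norm_pt (a b c : ℝ) : ‖pt a b c‖ = √(a ^ 2 + b ^ 2 + c ^ 2) := by
  simp [pt, EuclideanSpace.norm_eq, Fin.sum_univ_three, sq_abs]

theorem T2_dihedral_angles :
    dihedral (pt 0 0 0) (pt 2 2 (-1)) (pt 2 (-1) 2) (pt 1 (-2) (-2)) = Real.pi / 2 ∧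
    dihedral (pt 0 0 0) (pt 2 (-1) 2) (pt 2 2 (-1)) (pt 1 (-2) (-2)) = Real.pi / 2 ∧
    dihedral (pt 0 0 0) (pt 1 (-2) (-2)) (pt 2 2 (-1)) (pt 2 (-1) 2) = Real.pi / 2 ∧
    dihedral (pt 2 2 (-1)) (pt 2 (-1) 2) (pt 0 0 0) (pt 1 (-2) (-2)) = Real.arccos (Real.sqrt 3 / 3) ∧
    dihedral (pt 2 2 (-1)) (pt 1 (-2) (-2)) (pt 0 0 0) (pt 2 (-1) 2) = Real.arccos (Real.sqrt 3 / 3) ∧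
    dihedral (pt 2 (-1) 2) (pt 1 (-2) (-2)) (pt 0 0 0) (pt 2 2 (-1)) = Real.arccos (Real.sqrt 3 / 3) ∧
    Real.arccos (Real.sqrt 3 / 3) = (Real.pi - Real.arccos (1/3)) / 2 := by
  set u := pt 2 2 (-1)
  set v := pt 2 (-1) 2
  set w := pt 1 (-2) (-2)
  obtain ⟨huv, hvu, huw, hwu, hvw, hwv⟩ :
      ⟪u, v⟫ = 0 ∧ ⟪v, u⟫ = 0 ∧ ⟪u, w⟫ = 0 ∧ ⟪w, u⟫ = 0 ∧ ⟪v, w⟫ = 0 ∧ ⟪w, v⟫ = 0 := by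
    simp only [u, v, w, inner_pt]; norm_num
  obtain ⟨hu, hv, hw⟩ : ‖u‖ = 3 ∧ ‖v‖ = 3 ∧ ‖w‖ = 3 := by
    simp only [u, v, w, norm_pt]; norm_num
  rw [pt_zero]
  exact ⟨dihedral_zero_of_orthogonal huv huw hvw, dihedral_zero_of_orthogonal hvu hvw huw,
    dihedral_zero_of_orthogonal hwu hwv huv,
    dihedral_of_orthogonal_of_norm_eq huv huw hvw hu hv hw three_ne_zero,
    dihedral_of_orthogonal_of_norm_eq huw huv hwv hu hw hv three_ne_zero,
    dihedral_of_orthogonal_of_norm_eq hvw hvu hwu hv hw hu three_ne_zero,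
    arccos_sqrt_three_div_three⟩
end
end

section
/- If f : R → R is additive (f(a+b) = f(a)+f(b) for all a,b) and f(π) = 0, then the Dehn invariant D_f(T3) = Σ_{edges e} ℓ(e)·f(α_e) of the orthoscheme T3 = conv{(0,0,0), (2,2,-1), (3,0,-3), (5,-1,-1)} is zero. -/
/-!
Every dihedral angle of `T3` is `π / 2`, `π / 3` or `π / 4`, and an additive `f` with `f π = 0`
vanishes at every `π / n` because `n • f (π / n) = f π`; so every term of `D_f(T3)` vanishes.
-/

open Real MeasureTheory
noncomputable section
/-- The Dehn invariant `D_f` of the tetrahedron `conv {a,b,c,d}`: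
sum over the six edges of (length) ⬝ f(dihedral angle). -/
def dehnTetra (f : ℝ → ℝ) (a b c d : E3) : ℝ :=
  dist a b * f (dihedral a b c d) + dist a c * f (dihedral a c b d) +
  dist a d * f (dihedral a d b c) + dist b c * f (dihedral b c a d) +
  dist b d * f (dihedral b d a c) + dist c d * f (dihedral c d a b)

open InnerProductGeometry

lemma map_pi_div_natCast_eq_zero {f : ℝ → ℝ} (hadd : ∀ a b, f (a + b) = f a + f b)
    (hpi : f π = 0) (n : ℕ) : f (π / n) = 0 := by
  simpa [hpi, div_eq_inv_mul] using map_inv_natCast_smul (AddMonoidHom.mk' f hadd) ℝ ℝ n π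

section InnerProductSpace

variable {V : Type*} [NormedAddCommGroup V] [InnerProductSpace ℝ V]

/-- Stated with squares so that no square roots of the norms or of `cos θ` need evaluating. -/
lemma angle_eq_of_inner_sq_eq {x y : V} {θ : ℝ} (hθ₀ : 0 ≤ θ) (hθ : θ ≤ π / 2)
    (hpos : 0 < inner ℝ x y) (h : inner ℝ x y ^ 2 = cos θ ^ 2 * (‖x‖ ^ 2 * ‖y‖ ^ 2)) :
    angle x y = θ := by
  have hcos : 0 ≤ cos θ := cos_nonneg_of_mem_Icc ⟨by linarith [pi_pos], hθ⟩
  have hinner : inner ℝ x y = cos θ * (‖x‖ * ‖y‖) :=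
    (pow_left_inj₀ hpos.le (by positivity) two_ne_zero).mp (by rw [h]; ring)
  have hnorm : ‖x‖ * ‖y‖ ≠ 0 := by
    rintro h0
    rw [h0, mul_zero] at hinner
    exact hpos.ne' hinner
  rw [angle, hinner, mul_div_cancel_right₀ _ hnorm, arccos_cos hθ₀ (by linarith [pi_pos])]

end InnerProductSpace

@[simp]
lemma pt_sub_pt (a b c x y z : ℝ) : pt a b c - pt x y z = pt (a - x) (b - y) (c - z) := by
  ext i; fin_cases i <;> simp [pt]

@[simp]
lemma smul_pt (r a b c : ℝ) : r • pt a b c = pt (r * a) (r * b) (r * c) := by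
  ext i; fin_cases i <;> simp [pt]

@[simp]
lemma inner_pt_pt (a b c x y z : ℝ) :
    inner ℝ (pt a b c) (pt x y z) = a * x + b * y + c * z := by
  simp [pt, PiLp.inner_apply, Fin.sum_univ_three]
  ring

lemma norm_pt_sq (a b c : ℝ) : ‖pt a b c‖ ^ 2 = a ^ 2 + b ^ 2 + c ^ 2 := by
  simp [pt, EuclideanSpace.norm_sq_eq, Fin.sum_univ_three]

lemma dihedral_T3_01 :
    dihedral (pt 0 0 0) (pt 2 2 (-1)) (pt 3 0 (-3)) (pt 5 (-1) (-1)) = π / 4 := by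
  norm_num [dihedral]
  refine angle_eq_of_inner_sq_eq (by positivity) (by linarith [pi_pos]) ?_ ?_ <;>
    norm_num [norm_pt_sq, cos_pi_div_four, div_pow]

lemma dihedral_T3_02 :
    dihedral (pt 0 0 0) (pt 3 0 (-3)) (pt 2 2 (-1)) (pt 5 (-1) (-1)) = π / 2 := by
  norm_num [dihedral, norm_pt_sq, ← inner_eq_zero_iff_angle_eq_pi_div_two]

lemma dihedral_T3_03 :
    dihedral (pt 0 0 0) (pt 5 (-1) (-1)) (pt 2 2 (-1)) (pt 3 0 (-3)) = π / 3 := by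
  norm_num [dihedral]
  refine angle_eq_of_inner_sq_eq (by positivity) (by linarith [pi_pos]) ?_ ?_ <;>
    norm_num [norm_pt_sq, cos_pi_div_three]

lemma dihedral_T3_12 :
    dihedral (pt 2 2 (-1)) (pt 3 0 (-3)) (pt 0 0 0) (pt 5 (-1) (-1)) = π / 2 := by
  norm_num [dihedral, norm_pt_sq, ← inner_eq_zero_iff_angle_eq_pi_div_two]

lemma dihedral_T3_13 :
    dihedral (pt 2 2 (-1)) (pt 5 (-1) (-1)) (pt 0 0 0) (pt 3 0 (-3)) = π / 2 := by
  norm_num [dihedral, norm_pt_sq, ← inner_eq_zero_iff_angle_eq_pi_div_two]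

lemma dihedral_T3_23 :
    dihedral (pt 3 0 (-3)) (pt 5 (-1) (-1)) (pt 0 0 0) (pt 2 2 (-1)) = π / 4 := by
  norm_num [dihedral]
  refine angle_eq_of_inner_sq_eq (by positivity) (by linarith [pi_pos]) ?_ ?_ <;>
    norm_num [norm_pt_sq, cos_pi_div_four, div_pow]

theorem dehn_T3_eq_zero (f : ℝ → ℝ) (hadd : ∀ a b : ℝ, f (a + b) = f a + f b)
    (hpi : f Real.pi = 0) :
    dehnTetra f (pt 0 0 0) (pt 2 2 (-1)) (pt 3 0 (-3)) (pt 5 (-1) (-1)) = 0 := by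
  obtain ⟨h2, h3, h4⟩ : f (π / 2) = 0 ∧ f (π / 3) = 0 ∧ f (π / 4) = 0 := by
    refine ⟨?_, ?_, ?_⟩ <;> exact_mod_cast map_pi_div_natCast_eq_zero hadd hpi _
  rw [dehnTetra, dihedral_T3_01, dihedral_T3_02, dihedral_T3_03, dihedral_T3_12,
    dihedral_T3_13, dihedral_T3_23, h2, h3, h4]
  ring
end
end

section
/- There exists an additive function f : R → R with f(π) = 0 and f(arccos(1/3)) ≠ 0. -/
/-!
By Niven's theorem, a rational multiple of `π` has rational cosine only if that cosine lies in
`{-1, -1/2, 0, 1/2, 1}`; as `cos (arccos (1/3)) = 1/3`, the ratio `arccos (1/3) / π` is irrational.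
So `arccos (1/3)` lies outside the line `ℚ π` of the `ℚ`-vector space `ℝ`, and a `ℚ`-linear
functional vanishing on that line but not at `arccos (1/3)` is the required additive function.
-/

open Real

theorem Module.exists_dual_apply_eq_zero_apply_ne_zero {K V : Type*} [Field K] [AddCommGroup V]
    [Module K V] {x y : V} (hy : y ∉ Submodule.span K {x}) :
    ∃ f : Module.Dual K V, f x = 0 ∧ f y ≠ 0 := by
  obtain ⟨f, hfy, hf⟩ := Submodule.exists_dual_map_eq_bot_of_notMem hy inferInstance
  have hfx : f x ∈ Submodule.map f (Submodule.span K {x}) :=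
    Submodule.mem_map_of_mem (Submodule.mem_span_singleton_self x)
  exact ⟨f, by simpa [hf] using hfx, hfy⟩

theorem notMem_span_rat_singleton_of_irrational_div {x y : ℝ} (h : Irrational (y / x)) :
    y ∉ Submodule.span ℚ {x} := by
  rw [Submodule.mem_span_singleton]
  rintro ⟨r, rfl⟩
  rcases eq_or_ne x 0 with rfl | hx
  · simp at h
  · exact h ⟨r, by rw [Rat.smul_def, mul_div_cancel_right₀ _ hx]⟩

theorem irrational_div_pi_of_cos_eq_rat {θ : ℝ} {q : ℚ} (hcos : cos θ = q)
    (hq : (q : ℝ) ∉ ({-1, -1 / 2, 0, 1 / 2, 1} : Set ℝ)) : Irrational (θ / π) := by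
  rintro ⟨r, hr⟩
  have hθ : θ = r * π := by rw [hr, div_mul_cancel₀ _ pi_ne_zero]
  exact hq (hcos ▸ niven ⟨r, hθ⟩ ⟨q, hcos⟩)

theorem irrational_arccos_one_third_div_pi : Irrational (arccos (1 / 3) / π) :=
  irrational_div_pi_of_cos_eq_rat (q := 1 / 3)
    (by push_cast; exact cos_arccos (by norm_num) (by norm_num)) (by norm_num)

theorem exists_kagan_function_nonzero_at_arccos_third :
    ∃ f : ℝ → ℝ, (∀ a b : ℝ, f (a + b) = f a + f b) ∧
      f Real.pi = 0 ∧ f (Real.arccos (1/3)) ≠ 0 := by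
  obtain ⟨φ, hφπ, hφθ⟩ := Module.exists_dual_apply_eq_zero_apply_ne_zero
    (notMem_span_rat_singleton_of_irrational_div irrational_arccos_one_third_div_pi)
  refine ⟨fun x ↦ (φ x : ℝ), fun a b ↦ ?_, ?_, Rat.cast_ne_zero.mpr hφθ⟩
  · simp only [map_add, Rat.cast_add]
  · simp only [hφπ, Rat.cast_zero]
end

section
/- For every Kagan function f, D_f(T1) = 6√2·f(α) where α = arccos(1/3), and D_f(T2) = −(9/√2)·f(α). -/
open Real MeasureTheory
noncomputable section
open scoped RealInnerProductSpace

/-! T1 is the regular tetrahedron of edge √2, so all six dihedral angles equal α = arccos (1/3).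
T2 is trirectangular: its three edges at the origin are pairwise orthogonal of length 3. The
dihedral angles along these edges are π/2, and along the three edges 3√2 of the opposite face
they are arccos (1/√3) = (π - α)/2. A Kagan function vanishes at π/2 and takes the value
-f(α)/2 at (π - α)/2. Each dihedral angle is read off the Gram matrix of the edge vectors at a
vertex, which the polarization identity expresses through edge lengths. -/

theorem real_inner_sub_sub_eq_dist (a b c : E3) :
    ⟪b - a, c - a⟫ = (dist a b ^ 2 + dist a c ^ 2 - dist b c ^ 2) / 2 := by
  rw [real_inner_eq_norm_mul_self_add_norm_mul_self_sub_norm_sub_mul_self_div_two,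
    sub_sub_sub_cancel_right, dist_comm a b, dist_comm a c, dist_eq_norm, dist_eq_norm,
    dist_eq_norm]
  ring

theorem angle_sub_proj_eq_arccos {F : Type*} [NormedAddCommGroup F] [InnerProductSpace ℝ F]
    (x y z : F) :
    InnerProductGeometry.angle (y - (⟪y, x⟫ / ⟪x, x⟫) • x) (z - (⟪z, x⟫ / ⟪x, x⟫) • x) =
      arccos ((⟪y, z⟫ - ⟪x, y⟫ * ⟪x, z⟫ / ⟪x, x⟫) /
        (√(⟪y, y⟫ - ⟪x, y⟫ ^ 2 / ⟪x, x⟫) * √(⟪z, z⟫ - ⟪x, z⟫ ^ 2 / ⟪x, x⟫))) := by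
  rw [InnerProductGeometry.angle, norm_eq_sqrt_real_inner, norm_eq_sqrt_real_inner]
  simp only [inner_sub_left, inner_sub_right, real_inner_smul_left, real_inner_smul_right,
    real_inner_comm x y, real_inner_comm x z]
  have hschur : ∀ s xp xq pq : ℝ, pq - xp / s * xq - (xq / s * xp - xq / s * (xp / s * s)) =
      pq - xp * xq / s := by
    intro s xp xq pq
    rcases eq_or_ne s 0 with rfl | hs
    · simp
    · field_simp
      ring
  simp only [hschur, ← sq]

theorem dihedral_eq_arccos {a b c d : E3} {xx xy xz yy yz zz : ℝ}
    (hxx : ⟪b - a, b - a⟫ = xx) (hxy : ⟪b - a, c - a⟫ = xy) (hxz : ⟪b - a, d - a⟫ = xz)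
    (hyy : ⟪c - a, c - a⟫ = yy) (hyz : ⟪c - a, d - a⟫ = yz) (hzz : ⟪d - a, d - a⟫ = zz) :
    dihedral a b c d =
      arccos ((yz - xy * xz / xx) / (√(yy - xy ^ 2 / xx) * √(zz - xz ^ 2 / xx))) := by
  subst_vars
  exact angle_sub_proj_eq_arccos _ _ _

theorem dihedral_of_regular {a b c d : E3} {L : ℝ} (hL : 0 < L) (hab : dist a b = L)
    (hac : dist a c = L) (had : dist a d = L) (hbc : dist b c = L) (hbd : dist b d = L)
    (hcd : dist c d = L) : dihedral a b c d = arccos (1 / 3) := by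
  rw [dihedral_eq_arccos (xx := L ^ 2) (xy := L ^ 2 / 2) (xz := L ^ 2 / 2) (yy := L ^ 2)
    (yz := L ^ 2 / 2) (zz := L ^ 2)]
  · have hy : L ^ 2 - (L ^ 2 / 2) ^ 2 / L ^ 2 = 3 * L ^ 2 / 4 := by field_simp; ring
    rw [hy, mul_self_sqrt (by positivity)]
    congr 1
    field_simp
    ring
  all_goals
    rw [real_inner_sub_sub_eq_dist]
    simp only [dist_self, hab, hac, had, hbc, hbd, hcd]
    ring

theorem dihedral_of_trirectangular_apex {a b c d : E3} {L : ℝ} (hab : dist a b = L)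
    (hac : dist a c = L) (had : dist a d = L) (hbc : dist b c = √2 * L) (hbd : dist b d = √2 * L)
    (hcd : dist c d = √2 * L) : dihedral a b c d = π / 2 := by
  rw [dihedral_eq_arccos (xy := 0) (xz := 0) (yz := 0) rfl ?_ ?_ rfl ?_ rfl]
  · simp
  all_goals
    rw [real_inner_sub_sub_eq_dist]
    simp only [hab, hac, had, hbc, hbd, hcd, mul_pow, sq_sqrt zero_le_two]
    ring

theorem dihedral_of_trirectangular_base {a b c d : E3} {L : ℝ} (hL : 0 < L) (hab : dist a b = L)
    (hac : dist a c = L) (had : dist a d = L) (hbc : dist b c = √2 * L) (hbd : dist b d = √2 * L)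
    (hcd : dist c d = √2 * L) : dihedral b c a d = arccos (1 / √3) := by
  have h2 : √2 ^ 2 = 2 := sq_sqrt zero_le_two
  have hba : dist b a = L := by rw [dist_comm, hab]
  have hca : dist c a = L := by rw [dist_comm, hac]
  rw [dihedral_eq_arccos (xx := 2 * L ^ 2) (xy := L ^ 2) (xz := L ^ 2) (yy := L ^ 2) (yz := L ^ 2)
    (zz := 2 * L ^ 2)]
  · have hy : L ^ 2 - (L ^ 2) ^ 2 / (2 * L ^ 2) = L ^ 2 / 2 := by field_simp; ring
    have hz : 2 * L ^ 2 - (L ^ 2) ^ 2 / (2 * L ^ 2) = 3 * (L ^ 2 / 2) := by field_simp; ring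
    rw [← pow_two, hy, hz, sqrt_mul zero_le_three, mul_left_comm, mul_self_sqrt (by positivity)]
    congr 1
    field_simp
  all_goals
    rw [real_inner_sub_sub_eq_dist]
    simp only [dist_self, hba, hca, had, hbc, hbd, hcd, mul_pow, h2]
    ring

theorem arccos_inv_sqrt_three : arccos (1 / √3) = (π - arccos (1 / 3)) / 2 := by
  have h3 : √3 ^ 2 = 3 := sq_sqrt zero_le_three
  have hcos : cos (2 * arccos (1 / √3)) = -(1 / 3) := by
    rw [cos_two_mul, cos_arccos (by linarith [one_div_nonneg.mpr (sqrt_nonneg 3)])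
      (by rw [div_le_one (by positivity)]; nlinarith [sqrt_nonneg 3]), div_pow, h3]
    norm_num
  have hle : arccos (1 / √3) ≤ π / 2 := arccos_le_pi_div_two.mpr (by positivity)
  have h := arccos_cos (by linarith [arccos_nonneg (1 / √3)])
    (by linarith : 2 * arccos (1 / √3) ≤ π)
  rw [hcos, arccos_neg] at h
  linarith

theorem apply_pi_div_two {f : ℝ → ℝ} (hadd : ∀ a b, f (a + b) = f a + f b) (hpi : f π = 0) :
    f (π / 2) = 0 := by
  have h := hadd (π / 2) (π / 2)
  rw [add_halves, hpi] at h
  linarith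

theorem apply_pi_sub_div_two {f : ℝ → ℝ} (hadd : ∀ a b, f (a + b) = f a + f b) (hpi : f π = 0)
    (x : ℝ) : f ((π - x) / 2) = -(f x / 2) := by
  have hhalf := hadd ((π - x) / 2) ((π - x) / 2)
  have hsub := hadd (π - x) x
  rw [add_halves] at hhalf
  rw [sub_add_cancel, hpi] at hsub
  linarith

theorem dehnTetra_of_regular (f : ℝ → ℝ) {a b c d : E3} {L : ℝ} (hL : 0 < L) (hab : dist a b = L)
    (hac : dist a c = L) (had : dist a d = L) (hbc : dist b c = L) (hbd : dist b d = L)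
    (hcd : dist c d = L) : dehnTetra f a b c d = 6 * L * f (arccos (1 / 3)) := by
  have hba : dist b a = L := by rw [dist_comm, hab]
  have hca : dist c a = L := by rw [dist_comm, hac]
  have hda : dist d a = L := by rw [dist_comm, had]
  have hcb : dist c b = L := by rw [dist_comm, hbc]
  have hdb : dist d b = L := by rw [dist_comm, hbd]
  have hdc : dist d c = L := by rw [dist_comm, hcd]
  rw [dehnTetra, dihedral_of_regular hL hab hac had hbc hbd hcd,
    dihedral_of_regular hL hac hab had hcb hcd hbd, dihedral_of_regular hL had hab hac hdb hdc hbc,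
    dihedral_of_regular hL hbc hba hbd hca hcd had, dihedral_of_regular hL hbd hba hbc hda hdc hac,
    dihedral_of_regular hL hcd hca hcb hda hdb hab, hab, hac, had, hbc, hbd, hcd]
  ring

theorem dehnTetra_of_trirectangular (f : ℝ → ℝ) {a b c d : E3} {L : ℝ} (hL : 0 < L)
    (hab : dist a b = L) (hac : dist a c = L) (had : dist a d = L) (hbc : dist b c = √2 * L)
    (hbd : dist b d = √2 * L) (hcd : dist c d = √2 * L) :
    dehnTetra f a b c d = 3 * L * f (π / 2) + 3 * (√2 * L) * f (arccos (1 / √3)) := by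
  have hcb : dist c b = √2 * L := by rw [dist_comm, hbc]
  have hdb : dist d b = √2 * L := by rw [dist_comm, hbd]
  have hdc : dist d c = √2 * L := by rw [dist_comm, hcd]
  rw [dehnTetra, dihedral_of_trirectangular_apex hab hac had hbc hbd hcd,
    dihedral_of_trirectangular_apex hac hab had hcb hcd hbd,
    dihedral_of_trirectangular_apex had hab hac hdb hdc hbc,
    dihedral_of_trirectangular_base hL hab hac had hbc hbd hcd,
    dihedral_of_trirectangular_base hL hab had hac hbd hbc hdc,
    dihedral_of_trirectangular_base hL hac had hab hcd hcb hdb, hab, hac, had, hbc, hbd, hcd]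
  ring

theorem dist_pt_eq {a b c a' b' c' r : ℝ} (hr : 0 ≤ r)
    (h : (a - a') ^ 2 + (b - b') ^ 2 + (c - c') ^ 2 = r ^ 2) :
    dist (pt a b c) (pt a' b' c') = r := by
  simp only [EuclideanSpace.dist_eq, pt, Fin.sum_univ_three, Real.dist_eq, sq_abs]
  simp [h, sqrt_sq hr]

theorem dehn_T1_T2 (f : ℝ → ℝ) (hadd : ∀ a b : ℝ, f (a + b) = f a + f b)
    (hpi : f Real.pi = 0) :
    dehnTetra f (pt 0 0 0) (pt 1 1 0) (pt 1 0 1) (pt 0 1 1)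
      = 6 * Real.sqrt 2 * f (Real.arccos (1/3)) ∧
    dehnTetra f (pt 0 0 0) (pt 2 2 (-1)) (pt 2 (-1) 2) (pt 1 (-2) (-2))
      = -(9 / Real.sqrt 2) * f (Real.arccos (1/3)) := by
  constructor
  · apply dehnTetra_of_regular f (by positivity) <;>
      exact dist_pt_eq (by positivity) (by norm_num)
  · rw [dehnTetra_of_trirectangular f (by norm_num : (0 : ℝ) < 3), apply_pi_div_two hadd hpi,
      arccos_inv_sqrt_three, apply_pi_sub_div_two hadd hpi]
    · field_simp
      linear_combination -9 * f (arccos (1 / 3)) * mul_self_sqrt zero_le_two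
    all_goals exact dist_pt_eq (by positivity) (by norm_num [mul_pow])
end
end

section
/- For the flat square pyramid V_n = conv{(0,0,0),(n,0,0),(0,n,0),(n,n,0),(0,0,1)}, one has vol(V_n) = n^2/3 and χ(V_n) = n^2/2 − O(n) as n → ∞, so δ(V_n) ∼ n^2/6. -/
open Real MeasureTheory
noncomputable section
/-- The (normalized) solid angle of `P` at `x`. -/
def solidAngle (P : Set E3) (x : E3) : ℝ :=
  Filter.limUnder (nhdsWithin (0:ℝ) (Set.Ioi 0))
    (fun ε => (volume (Metric.ball x ε ∩ P)).toReal / (volume (Metric.ball x ε)).toReal)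
/-- The discrete volume `χ(P)`: the sum of solid angles over all lattice points of `P`. -/
def discreteVolume (P : Set E3) : ℝ :=
  ∑' v : Fin 3 → ℤ, Set.indicator P (solidAngle P) (WithLp.toLp 2 (fun i => (v i : ℝ)) : E3)
/-- The volume defect `δ(P) = χ(P) - vol(P)`. -/
def defect (P : Set E3) : ℝ := discreteVolume P - (volume P).toReal

/-- The flat square pyramid `V_n`. -/
def flatPyramid (n : ℕ) : Set E3 :=
  convexHull ℝ {pt 0 0 0, pt (n : ℝ) 0 0, pt 0 (n : ℝ) 0, pt (n : ℝ) (n : ℝ) 0, pt 0 0 1}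

/-!
Slicing `V_n` at height `z` gives the square `[0, n(1 - z)]²`, so
`vol V_n = ∫₀¹ n²(1 - z)² dz = n²/3`. The lattice points of `V_n` are the `(n + 1)²` points of its base and the apex. Near each of the
`(n - 1)²` lattice points interior to the base, `V_n` coincides with the half-space `z ≥ 0`, whose
solid angle is `1/2` because the point reflection about the centre exchanges the two halves of a
ball. Every other solid angle lies in `[0, 1]`: for a convex set containing `x`, the fraction of
`B_ε(x)` it fills does not decrease as `ε ↓ 0`, so the limit defining the solid angle exists.
Hence `χ(V_n) = (n - 1)²/2 + O(n) = n²/2 + O(n)` and `δ(V_n) = n²/2 - n²/3 + O(n) ∼ n²/6`.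
-/

open Filter Set Metric Measure Topology

section BallFraction

variable {X : Type*} [PseudoMetricSpace X] [MeasurableSpace X]

def ballFraction (μ : Measure X) (s : Set X) (x : X) (ε : ℝ) : ℝ :=
  (μ (ball x ε ∩ s)).toReal / (μ (ball x ε)).toReal

lemma ballFraction_mem_Icc [ProperSpace X] (μ : Measure X) [IsFiniteMeasureOnCompacts μ]
    (s : Set X) (x : X) (ε : ℝ) : ballFraction μ s x ε ∈ Icc 0 1 :=
  ⟨by unfold ballFraction; positivity, div_le_one_of_le₀
    (ENNReal.toReal_mono measure_ball_lt_top.ne (measure_mono inter_subset_left))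
    ENNReal.toReal_nonneg⟩

lemma ballFraction_congr {μ : Measure X} {s t : Set X} {x : X} {r ε : ℝ}
    (h : ball x r ∩ s = ball x r ∩ t) (hε : ε ≤ r) :
    ballFraction μ s x ε = ballFraction μ t x ε := by
  have hball : ball x ε = ball x ε ∩ ball x r := (inter_eq_left.2 (ball_subset_ball hε)).symm
  rw [ballFraction, ballFraction, hball, inter_assoc, h, ← inter_assoc, ← hball]

end BallFraction

section AddHaar

variable {E : Type*} [NormedAddCommGroup E] [NormedSpace ℝ E] [MeasurableSpace E] [BorelSpace E]
  [FiniteDimensional ℝ E] (μ : Measure E) [μ.IsAddHaarMeasure]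

/-- The homothety of ratio `ε / ε'` about `x` maps `ball x ε' ∩ s` into `ball x ε ∩ s`. -/
lemma antitoneOn_ballFraction {s : Set E} (hs : Convex ℝ s) {x : E} (hx : x ∈ s) :
    AntitoneOn (ballFraction μ s x) (Ioi 0) := by
  intro ε (hε : 0 < ε) ε' (hε' : 0 < ε') hle
  set t := ε / ε'
  have htpos : 0 < t := div_pos hε hε'
  have ht : t ∈ Icc (0 : ℝ) 1 := ⟨htpos.le, div_le_one_of_le₀ hle hε'.le⟩
  have hsub : AffineMap.homothety x t '' (ball x ε' ∩ s) ⊆ ball x ε ∩ s := by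
    rintro _ ⟨y, ⟨hy, hys⟩, rfl⟩
    refine ⟨?_, by rw [AffineMap.homothety_eq_lineMap]; exact hs.lineMap_mem hx hys ht⟩
    rw [mem_ball, dist_homothety_center, Real.norm_of_nonneg ht.1, dist_comm]
    calc t * dist y x < t * ε' := by gcongr; exact mem_ball.1 hy
      _ = ε := div_mul_cancel₀ ε hε'.ne'
  set c := ENNReal.ofReal (t ^ Module.finrank ℝ E)
  have hc : c.toReal ≠ 0 := by
    rw [ENNReal.toReal_ofReal (by positivity)]; exact pow_ne_zero _ htpos.ne'
  calc ballFraction μ s x ε'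
      = (c * μ (ball x ε' ∩ s)).toReal / (c * μ (ball x ε')).toReal := by
        rw [ENNReal.toReal_mul, ENNReal.toReal_mul, mul_div_mul_left _ _ hc, ballFraction]
    _ = (μ (AffineMap.homothety x t '' (ball x ε' ∩ s))).toReal / (μ (ball x ε)).toReal := by
        rw [addHaar_image_homothety, abs_of_nonneg (pow_nonneg ht.1 _),
          addHaar_ball_center μ x ε', ← addHaar_ball_mul_of_pos μ x htpos,
          div_mul_cancel₀ ε hε'.ne']
    _ ≤ ballFraction μ s x ε := by
        rw [ballFraction]
        gcongr
        exact ((measure_mono inter_subset_left).trans_lt measure_ball_lt_top).ne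

lemma exists_tendsto_ballFraction {s : Set E} (hs : Convex ℝ s) {x : E} (hx : x ∈ s) :
    ∃ L, Tendsto (ballFraction μ s x) (𝓝[>] 0) (𝓝 L) :=
  ⟨_, (antitoneOn_ballFraction μ hs hx).tendsto_nhdsGT
    ⟨1, forall_mem_image.2 fun ε _ => (ballFraction_mem_Icc μ s x ε).2⟩⟩

/-- The point reflection about `x` swaps the two halves of `ball x r`, which meet in a null
hyperplane. -/
lemma measure_ball_inter_halfspace {f : E →L[ℝ] ℝ} (hf : f ≠ 0) (x : E) (r : ℝ) :
    μ (ball x r ∩ {y | f x ≤ f y}) = μ (ball x r) / 2 := by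
  set B := ball x r
  set H := {y | f x ≤ f y}
  set H' := {y | f y ≤ f x}
  have hreflect : AffineMap.homothety x (-1 : ℝ) '' (B ∩ H) = B ∩ H' := by
    have hσ : ∀ y, AffineMap.homothety x (-1 : ℝ) y = x - (y - x) := fun y => by
      rw [AffineMap.homothety_apply, neg_one_smul, vsub_eq_sub, vadd_eq_add, neg_add_eq_sub]
    have hdist : ∀ y, dist (x - (y - x)) x = dist y x := fun y => by
      rw [dist_eq_norm, dist_eq_norm, sub_sub_cancel_left, norm_neg]
    ext y
    simp only [mem_image, mem_inter_iff, mem_ofPred_eq, hσ, B, H, H', mem_ball]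
    constructor
    · rintro ⟨z, ⟨hz, hzH⟩, rfl⟩
      refine ⟨by rwa [hdist], ?_⟩
      rw [map_sub, map_sub]; linarith
    · rintro ⟨hy, hyH'⟩
      refine ⟨x - (y - x), ⟨by rwa [hdist], ?_⟩, by abel⟩
      rw [map_sub, map_sub]; linarith
  have hH' : μ (B ∩ H') = μ (B ∩ H) := by
    rw [← hreflect, addHaar_image_homothety]
    simp
  have hnull : μ ((B ∩ H) ∩ (B ∩ H')) = 0 := by
    refine measure_mono_null (t := AffineSubspace.mk' x (LinearMap.ker (f : E →ₗ[ℝ] ℝ)))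
      (fun y hy => ?_) (addHaar_affineSubspace μ _ fun htop => hf ?_)
    · have hfy : f y = f x := le_antisymm hy.2.2 hy.1.2
      simp [AffineSubspace.mem_mk', hfy]
    · have := congrArg AffineSubspace.direction htop
      rw [AffineSubspace.direction_mk', AffineSubspace.direction_top, LinearMap.ker_eq_top] at this
      exact ContinuousLinearMap.coe_injective this
  have hunion : (B ∩ H) ∪ (B ∩ H') = B := by
    rw [← inter_union_distrib_left, inter_eq_left]
    exact fun y _ => le_total (f x) (f y)
  have hmeas : MeasurableSet (B ∩ H') :=
    measurableSet_ball.inter (measurableSet_le f.continuous.measurable measurable_const)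
  have := measure_union_add_inter (B ∩ H) hmeas (μ := μ)
  rw [hunion, hnull, add_zero, hH', ← two_mul] at this
  rw [this, mul_comm, ENNReal.mul_div_cancel_right two_ne_zero ENNReal.ofNat_ne_top]

lemma ballFraction_halfspace {f : E →L[ℝ] ℝ} (hf : f ≠ 0) (x : E) {ε : ℝ} (hε : 0 < ε) :
    ballFraction μ {y | f x ≤ f y} x ε = 1 / 2 := by
  have hball : (μ (ball x ε)).toReal ≠ 0 :=
    (ENNReal.toReal_pos (measure_ball_pos μ x hε).ne' measure_ball_lt_top.ne).ne'
  rw [ballFraction, measure_ball_inter_halfspace μ hf, ENNReal.toReal_div]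
  field_simp
  norm_num

end AddHaar

lemma solidAngle_eq_limUnder (P : Set E3) (x : E3) :
    solidAngle P x = limUnder (𝓝[>] 0) (ballFraction volume P x) := rfl

lemma solidAngle_mem_Icc {P : Set E3} (hP : Convex ℝ P) {x : E3} (hx : x ∈ P) :
    solidAngle P x ∈ Icc 0 1 := by
  obtain ⟨L, hL⟩ := exists_tendsto_ballFraction volume hP hx
  rw [solidAngle_eq_limUnder, hL.limUnder_eq]
  exact isClosed_Icc.mem_of_tendsto hL (Eventually.of_forall (ballFraction_mem_Icc volume P x))

lemma solidAngle_congr {P Q : Set E3} {x : E3} {r : ℝ} (hr : 0 < r)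
    (h : ball x r ∩ P = ball x r ∩ Q) : solidAngle P x = solidAngle Q x := by
  rw [solidAngle_eq_limUnder, solidAngle_eq_limUnder, limUnder, limUnder, Filter.map_congr]
  filter_upwards [Ioo_mem_nhdsGT hr] with ε hε using ballFraction_congr h hε.2.le

lemma solidAngle_halfspace {f : E3 →L[ℝ] ℝ} (hf : f ≠ 0) (x : E3) :
    solidAngle {y | f x ≤ f y} x = 1 / 2 := by
  rw [solidAngle_eq_limUnder]
  refine (tendsto_const_nhds.congr' ?_).limUnder_eq
  filter_upwards [self_mem_nhdsWithin] with ε hε using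
    (ballFraction_halfspace volume hf x hε).symm

lemma indicator_solidAngle_mem_Icc {P : Set E3} (hP : Convex ℝ P) (x : E3) :
    P.indicator (solidAngle P) x ∈ Icc 0 1 := by
  by_cases hx : x ∈ P
  · rw [indicator_of_mem hx]; exact solidAngle_mem_Icc hP hx
  · rw [indicator_of_notMem hx]; exact ⟨le_rfl, zero_le_one⟩

@[simp] lemma pt_apply_zero (a b c : ℝ) : pt a b c 0 = a := rfl
@[simp] lemma pt_apply_one (a b c : ℝ) : pt a b c 1 = b := rfl
@[simp] lemma pt_apply_two (a b c : ℝ) : pt a b c 2 = c := rfl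

lemma convex_flatPyramid_ineqs (n : ℕ) : Convex ℝ
    {p : E3 | 0 ≤ p 0 ∧ 0 ≤ p 1 ∧ 0 ≤ p 2 ∧ p 2 ≤ 1 ∧ p 0 + n * p 2 ≤ n ∧ p 1 + n * p 2 ≤ n} := by
  rintro x ⟨hx₀, hx₁, hx₂, hx₂', hx₃, hx₄⟩ y ⟨hy₀, hy₁, hy₂, hy₂', hy₃, hy₄⟩ a b ha hb hab
  simp only [mem_ofPred_eq, PiLp.add_apply, PiLp.smul_apply, smul_eq_mul]
  refine ⟨?_, ?_, ?_, ?_, ?_, ?_⟩ <;> nlinarith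

/-- `p = (1 - z) • q + z • apex`, where `q = (n u, n v, 0)` is the bilinear combination of the base
vertices with weights `u = p 0 / s`, `v = p 1 / s`, `s = n (1 - z)`. When `s = 0` the junk values
`u = v = 0` still work, because then `p 0 = p 1 = 0`. -/
lemma mem_flatPyramid_of_ineqs {n : ℕ} {p : E3} (h₀ : 0 ≤ p 0) (h₁ : 0 ≤ p 1) (h₂ : 0 ≤ p 2)
    (h₂' : p 2 ≤ 1) (h₃ : p 0 + n * p 2 ≤ n) (h₄ : p 1 + n * p 2 ≤ n) : p ∈ flatPyramid n := by
  have hc : Convex ℝ (flatPyramid n) := convex_convexHull ℝ _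
  have hO : pt 0 0 0 ∈ flatPyramid n := subset_convexHull ℝ _ (by simp)
  have hX : pt n 0 0 ∈ flatPyramid n := subset_convexHull ℝ _ (by simp)
  have hY : pt 0 n 0 ∈ flatPyramid n := subset_convexHull ℝ _ (by simp)
  have hXY : pt n n 0 ∈ flatPyramid n := subset_convexHull ℝ _ (by simp)
  have hA : pt 0 0 1 ∈ flatPyramid n := subset_convexHull ℝ _ (by simp)
  set s := (n : ℝ) * (1 - p 2)
  have hs : 0 ≤ s := by positivity
  set u := p 0 / s
  set v := p 1 / s
  have hu : s * u = p 0 := mul_div_cancel_of_imp' fun h => by linarith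
  have hv : s * v = p 1 := mul_div_cancel_of_imp' fun h => by linarith
  have hu₁ : u ≤ 1 := div_le_one_of_le₀ (by linarith) hs
  have hv₁ : v ≤ 1 := div_le_one_of_le₀ (by linarith) hs
  have hu₀ : 0 ≤ u := div_nonneg h₀ hs
  have hv₀ : 0 ≤ v := div_nonneg h₁ hs
  have hp : p = (1 - p 2) • ((1 - v) • ((1 - u) • pt 0 0 0 + u • pt n 0 0)
      + v • ((1 - u) • pt 0 n 0 + u • pt n n 0)) + p 2 • pt 0 0 1 := by
    ext i
    fin_cases i <;> simp only [Fin.zero_eta, Fin.mk_one, Fin.reduceFinMk, PiLp.add_apply,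
      PiLp.smul_apply, pt_apply_zero, pt_apply_one, pt_apply_two, smul_eq_mul, mul_zero, mul_one,
      zero_add, add_zero]
    · linear_combination -hu
    · linear_combination -hv
  rw [hp]
  exact hc (hc (hc hO hX (by linarith) hu₀ (by ring)) (hc hY hXY (by linarith) hu₀ (by ring))
    (by linarith) hv₀ (by ring)) hA (by linarith) h₂ (by ring)

lemma mem_flatPyramid {n : ℕ} {p : E3} : p ∈ flatPyramid n ↔
    0 ≤ p 0 ∧ 0 ≤ p 1 ∧ 0 ≤ p 2 ∧ p 2 ≤ 1 ∧ p 0 + n * p 2 ≤ n ∧ p 1 + n * p 2 ≤ n := by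
  refine ⟨fun hp => convexHull_min ?_ (convex_flatPyramid_ineqs n) hp, fun h =>
    mem_flatPyramid_of_ineqs h.1 h.2.1 h.2.2.1 h.2.2.2.1 h.2.2.2.2.1 h.2.2.2.2.2⟩
  simp only [insert_subset_iff, singleton_subset_iff, mem_ofPred_eq, pt_apply_zero, pt_apply_one,
    pt_apply_two]
  norm_num

def flatPyramidProd (n : ℕ) : Set (ℝ × (Fin 2 → ℝ)) :=
  {q | q.1 ∈ Icc 0 1 ∧ q.2 ∈ univ.pi fun _ => Icc 0 (n * (1 - q.1))}

lemma measurableSet_flatPyramidProd (n : ℕ) : MeasurableSet (flatPyramidProd n) := by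
  unfold flatPyramidProd
  measurability

lemma volume_slice_flatPyramidProd (n : ℕ) (z : ℝ) :
    volume (Prod.mk z ⁻¹' flatPyramidProd n) =
      (Icc 0 1).indicator (fun z => ENNReal.ofReal ((n * (1 - z)) ^ 2)) z := by
  by_cases hz : z ∈ Icc (0 : ℝ) 1
  · have : Prod.mk z ⁻¹' flatPyramidProd n = univ.pi fun _ => Icc 0 (n * (1 - z)) := by
      ext w
      simp only [flatPyramidProd, mem_preimage, mem_ofPred_eq, hz, true_and]
    rw [indicator_of_mem hz, this, volume_pi_pi]
    simp only [Real.volume_Icc, sub_zero, Finset.prod_const, Finset.card_univ, Fintype.card_fin]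
    rw [ENNReal.ofReal_pow (by nlinarith [hz.2])]
  · have : Prod.mk z ⁻¹' flatPyramidProd n = ∅ := by
      ext w
      simp only [flatPyramidProd, mem_preimage, mem_ofPred_eq, hz, false_and, mem_empty_iff_false]
    rw [indicator_of_notMem hz, this, measure_empty]

lemma integral_mul_one_sub_sq (n : ℕ) :
    ∫ z in (0 : ℝ)..1, ((n : ℝ) * (1 - z)) ^ 2 = (n : ℝ) ^ 2 / 3 := by
  simp only [mul_pow, intervalIntegral.integral_const_mul,
    intervalIntegral.integral_comp_sub_left (fun z => z ^ 2), sub_self, sub_zero, integral_pow]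
  ring

lemma flatPyramid_eq_preimage (n : ℕ) : flatPyramid n =
    (MeasurableEquiv.toLp 2 (Fin 3 → ℝ)).symm ⁻¹'
      (MeasurableEquiv.piFinSuccAbove (fun _ : Fin 3 => ℝ) 2 ⁻¹' flatPyramidProd n) := by
  ext p
  have hs₀ : (2 : Fin 3).succAbove 0 = 0 := rfl
  have hs₁ : (2 : Fin 3).succAbove 1 = 1 := rfl
  simp only [mem_flatPyramid, MeasurableEquiv.piFinSuccAbove_apply, flatPyramidProd, mem_Icc,
    pi_univ_Icc, Pi.le_def, Fin.forall_fin_two, preimage_ofPred_eq, Fin.insertNthEquiv_symm_apply,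
    Fin.removeNth_apply, hs₀, hs₁, MeasurableEquiv.toLp_symm_apply, mem_ofPred_eq]
  constructor
  · rintro ⟨h₀, h₁, h₂, h₂', h₃, h₄⟩
    exact ⟨⟨h₂, h₂'⟩, ⟨h₀, h₁⟩, by linarith, by linarith⟩
  · rintro ⟨⟨h₂, h₂'⟩, ⟨h₀, h₁⟩, h₃, h₄⟩
    exact ⟨h₀, h₁, h₂, h₂', by linarith, by linarith⟩

lemma volume_flatPyramid (n : ℕ) : volume (flatPyramid n) = ENNReal.ofReal (n ^ 2 / 3) := by
  rw [flatPyramid_eq_preimage,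
    (EuclideanSpace.volume_preserving_symm_measurableEquiv_toLp (Fin 3)).measure_preimage
      ((MeasurableEquiv.piFinSuccAbove _ 2).measurable
        (measurableSet_flatPyramidProd n)).nullMeasurableSet,
    (volume_preserving_piFinSuccAbove (fun _ : Fin 3 => ℝ) 2).measure_preimage
      (measurableSet_flatPyramidProd n).nullMeasurableSet,
    Measure.volume_eq_prod, Measure.prod_apply (measurableSet_flatPyramidProd n)]
  simp_rw [volume_slice_flatPyramidProd]
  rw [lintegral_indicator measurableSet_Icc, ← ofReal_integral_eq_lintegral_ofReal,
    integral_Icc_eq_integral_Ioc, ← intervalIntegral.integral_of_le zero_le_one,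
    integral_mul_one_sub_sq]
  · exact (by fun_prop : Continuous fun z : ℝ => ((n : ℝ) * (1 - z)) ^ 2).integrableOn_Icc
  · exact Eventually.of_forall fun z => by positivity

lemma Finset.sum_mem_Icc_of_eqOn_of_mem_Icc {ι : Type*} [DecidableEq ι] {S I : Finset ι}
    (hIS : I ⊆ S) {f : ι → ℝ} {c : ℝ} (hI : ∀ i ∈ I, f i = c) (hS : ∀ i ∈ S, f i ∈ Set.Icc 0 1) :
    ∑ i ∈ S, f i ∈ Set.Icc (c * I.card) (c * I.card + (S \ I).card) := by
  have hrest : ∀ i ∈ S \ I, f i ∈ Set.Icc 0 1 := fun i hi => hS i (Finset.sdiff_subset hi)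
  have h₀ : 0 ≤ ∑ i ∈ S \ I, f i := Finset.sum_nonneg fun i hi => (hrest i hi).1
  have h₁ : ∑ i ∈ S \ I, f i ≤ (S \ I).card := by
    simpa using Finset.sum_le_card_nsmul (S \ I) f 1 fun i hi => (hrest i hi).2
  rw [← Finset.sum_sdiff hIS, Finset.sum_congr rfl hI, Finset.sum_const, nsmul_eq_mul, mul_comm]
  exact ⟨by linarith, by linarith⟩

def latticePoint (v : Fin 3 → ℤ) : E3 := WithLp.toLp 2 fun i => (v i : ℝ)

@[simp] lemma latticePoint_apply (v : Fin 3 → ℤ) (i : Fin 3) : latticePoint v i = v i := rfl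

lemma discreteVolume_eq_sum {P : Set E3} (S : Finset (Fin 3 → ℤ))
    (hS : ∀ v, latticePoint v ∈ P → v ∈ S) :
    discreteVolume P = ∑ v ∈ S, P.indicator (solidAngle P) (latticePoint v) :=
  tsum_eq_sum fun v hv => indicator_of_notMem (fun h => hv (hS v h)) _

lemma latticePoint_mem_flatPyramid {n : ℕ} {v : Fin 3 → ℤ} : latticePoint v ∈ flatPyramid n ↔
    0 ≤ v 0 ∧ 0 ≤ v 1 ∧ 0 ≤ v 2 ∧ v 2 ≤ 1 ∧ v 0 + n * v 2 ≤ n ∧ v 1 + n * v 2 ≤ n := by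
  simp only [mem_flatPyramid, latticePoint_apply]
  norm_cast

def flatPyramidLattice (n : ℕ) : Finset (Fin 3 → ℤ) :=
  insert ![0, 0, 1] (Finset.Icc 0 ![(n : ℤ), n, 0])

def flatPyramidBaseInterior (n : ℕ) : Finset (Fin 3 → ℤ) :=
  Finset.Icc ![1, 1, 0] ![(n : ℤ) - 1, n - 1, 0]

lemma mem_flatPyramidBaseInterior {n : ℕ} {v : Fin 3 → ℤ} : v ∈ flatPyramidBaseInterior n ↔
    1 ≤ v 0 ∧ v 0 < n ∧ 1 ≤ v 1 ∧ v 1 < n ∧ v 2 = 0 := by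
  simp only [flatPyramidBaseInterior, Finset.mem_Icc, Pi.le_def, Fin.forall_fin_succ,
    Matrix.cons_val_zero, Matrix.cons_val_succ, Fin.succ_zero_eq_one, Matrix.cons_val_fin_one,
    Fin.succ_one_eq_two, IsEmpty.forall_iff, and_true, Order.le_sub_one_iff]
  omega

lemma mem_flatPyramidLattice_iff {n : ℕ} {v : Fin 3 → ℤ} : v ∈ flatPyramidLattice n ↔
    v 0 = 0 ∧ v 1 = 0 ∧ v 2 = 1 ∨ 0 ≤ v 0 ∧ v 0 ≤ n ∧ 0 ≤ v 1 ∧ v 1 ≤ n ∧ v 2 = 0 := by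
  simp only [flatPyramidLattice, Finset.mem_insert, funext_iff, Fin.forall_fin_succ,
    Matrix.cons_val_zero, Matrix.cons_val_succ, Fin.succ_zero_eq_one, Matrix.cons_val_fin_one,
    Fin.succ_one_eq_two, IsEmpty.forall_iff, and_true, Finset.mem_Icc, Pi.le_def, Pi.zero_apply]
  omega

lemma mem_flatPyramidLattice {n : ℕ} {v : Fin 3 → ℤ} (hv : latticePoint v ∈ flatPyramid n) :
    v ∈ flatPyramidLattice n := by
  obtain ⟨h₀, h₁, h₂, h₂', h₃, h₄⟩ := latticePoint_mem_flatPyramid.1 hv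
  rw [mem_flatPyramidLattice_iff]
  rcases (by omega : v 2 = 0 ∨ v 2 = 1) with hz | hz <;> rw [hz] at h₃ h₄ <;> omega

lemma flatPyramidBaseInterior_subset (n : ℕ) :
    flatPyramidBaseInterior n ⊆ flatPyramidLattice n := fun v hv => by
  rw [mem_flatPyramidBaseInterior] at hv
  rw [mem_flatPyramidLattice_iff]
  omega

lemma card_flatPyramidBaseInterior (n : ℕ) : (flatPyramidBaseInterior n).card = (n - 1) ^ 2 := by
  simp [flatPyramidBaseInterior, Pi.card_Icc, Fin.prod_univ_three, sq]

lemma card_flatPyramidLattice_le (n : ℕ) : (flatPyramidLattice n).card ≤ (n + 1) ^ 2 + 1 := by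
  refine (Finset.card_insert_le _ _).trans ?_
  simp [Pi.card_Icc, Fin.prod_univ_three, sq]

lemma solidAngle_flatPyramid_of_mem_baseInterior {n : ℕ} {v : Fin 3 → ℤ}
    (hv : v ∈ flatPyramidBaseInterior n) : solidAngle (flatPyramid n) (latticePoint v) = 1 / 2 := by
  obtain ⟨h₀, h₀', h₁, h₁', h₂⟩ := mem_flatPyramidBaseInterior.1 hv
  have hx₀ : (1 : ℝ) ≤ v 0 := by exact_mod_cast h₀
  have hx₀' : (v 0 : ℝ) ≤ n - 1 := by exact_mod_cast (by omega : v 0 ≤ n - 1)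
  have hx₁ : (1 : ℝ) ≤ v 1 := by exact_mod_cast h₁
  have hx₁' : (v 1 : ℝ) ≤ n - 1 := by exact_mod_cast (by omega : v 1 ≤ n - 1)
  set x := latticePoint v
  set f : E3 →L[ℝ] ℝ := EuclideanSpace.proj 2
  have hf : f ≠ 0 := fun h => by
    simpa [f] using DFunLike.congr_fun h (EuclideanSpace.single 2 1)
  set r : ℝ := 1 / (n + 1)
  have hr : 0 < r := by positivity
  have hnr : (n + 1) * r = 1 := mul_one_div_cancel (by positivity)
  have hlocal : ball x r ∩ flatPyramid n = ball x r ∩ {y | f x ≤ f y} := by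
    ext y
    have hfy : f x ≤ f y ↔ 0 ≤ y 2 := by simp [f, x, h₂]
    simp only [mem_inter_iff, mem_ofPred_eq, hfy, mem_flatPyramid]
    refine ⟨fun ⟨hy, h⟩ => ⟨hy, h.2.2.1⟩, fun ⟨hy, hy₂⟩ => ⟨hy, ?_⟩⟩
    have hc : ∀ i, |y i - v i| < r := fun i =>
      (PiLp.dist_apply_le y x i).trans_lt (mem_ball.1 hy)
    obtain ⟨hc₀, hc₀'⟩ := abs_lt.1 (hc 0)
    obtain ⟨hc₁, hc₁'⟩ := abs_lt.1 (hc 1)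
    obtain ⟨-, hc₂'⟩ := abs_lt.1 (hc 2)
    have h₂r : (v 2 : ℝ) = 0 := by exact_mod_cast h₂
    have hny : n * y 2 ≤ n * r := by gcongr; linarith
    have hr₁ : r ≤ 1 := div_le_one_of_le₀ (by linarith) (by positivity)
    refine ⟨by linarith, by linarith, hy₂, by linarith, by linarith, by linarith⟩
  rw [solidAngle_congr hr hlocal, solidAngle_halfspace hf]

lemma abs_discreteVolume_flatPyramid_sub_le {n : ℕ} (hn : 1 ≤ n) :
    |discreteVolume (flatPyramid n) - (n : ℝ) ^ 2 / 2| ≤ 5 * (n : ℝ) := by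
  set S := flatPyramidLattice n
  set I := flatPyramidBaseInterior n
  have hIS : I ⊆ S := flatPyramidBaseInterior_subset n
  have hhalf : ∀ v ∈ I,
      (flatPyramid n).indicator (solidAngle (flatPyramid n)) (latticePoint v) = 1 / 2 := by
    intro v hv
    obtain ⟨h₀, h₀', h₁, h₁', h₂⟩ := mem_flatPyramidBaseInterior.1 hv
    have hmem : latticePoint v ∈ flatPyramid n := by
      rw [latticePoint_mem_flatPyramid, h₂]
      omega
    rw [indicator_of_mem hmem, solidAngle_flatPyramid_of_mem_baseInterior hv]
  have hsum := Finset.sum_mem_Icc_of_eqOn_of_mem_Icc hIS hhalf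
    fun v _ => indicator_solidAngle_mem_Icc (convex_convexHull ℝ _) _
  rw [← discreteVolume_eq_sum S fun v => mem_flatPyramidLattice] at hsum
  have hI : (I.card : ℝ) = (n - 1) ^ 2 := by
    rw [card_flatPyramidBaseInterior, Nat.cast_pow, Nat.cast_sub hn, Nat.cast_one]
  have hS : (S.card : ℝ) ≤ (n + 1) ^ 2 + 1 := by exact_mod_cast card_flatPyramidLattice_le n
  have hSI : ((S \ I).card : ℝ) = S.card - I.card := by
    rw [Finset.card_sdiff_of_subset hIS, Nat.cast_sub (Finset.card_le_card hIS)]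
  have hn' : (1 : ℝ) ≤ n := by exact_mod_cast hn
  rw [hSI, hI] at hsum
  rw [abs_le]
  constructor <;> nlinarith [hsum.1, hsum.2]

theorem flat_pyramid_volume_discreteVolume_defect :
    (∀ n : ℕ, (volume (flatPyramid n)).toReal = (n : ℝ) ^ 2 / 3) ∧
    (fun n : ℕ => discreteVolume (flatPyramid n) - (n : ℝ) ^ 2 / 2)
      =O[Filter.atTop] (fun n : ℕ => (n : ℝ)) ∧
    Asymptotics.IsEquivalent Filter.atTop
      (fun n : ℕ => defect (flatPyramid n)) (fun n : ℕ => (n : ℝ) ^ 2 / 6) := by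
  have hvol (n : ℕ) : (volume (flatPyramid n)).toReal = (n : ℝ) ^ 2 / 3 := by
    rw [volume_flatPyramid, ENNReal.toReal_ofReal (by positivity)]
  have hχ : (fun n : ℕ => discreteVolume (flatPyramid n) - (n : ℝ) ^ 2 / 2)
      =O[atTop] (fun n : ℕ => (n : ℝ)) := by
    refine Asymptotics.IsBigO.of_bound 5 ?_
    filter_upwards [eventually_ge_atTop 1] with n hn
    simpa using abs_discreteVolume_flatPyramid_sub_le hn
  have hlin : (fun n : ℕ => (n : ℝ)) =o[atTop] (fun n : ℕ => (n : ℝ) ^ 2 / 6) := by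
    have := ((Asymptotics.isLittleO_pow_pow_atTop_of_lt one_lt_two).comp_tendsto
      tendsto_natCast_atTop_atTop).const_mul_right (c := (6 : ℝ)⁻¹) (by norm_num)
    simpa [Function.comp_def, div_eq_inv_mul] using this
  refine ⟨hvol, hχ, ?_⟩
  have hdefect : (fun n : ℕ => defect (flatPyramid n)) - (fun n : ℕ => (n : ℝ) ^ 2 / 6) =
      fun n : ℕ => discreteVolume (flatPyramid n) - (n : ℝ) ^ 2 / 2 := by
    ext n
    simp only [Pi.sub_apply, defect, hvol]
    ring
  rw [Asymptotics.IsEquivalent, hdefect]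
  exact hχ.trans_isLittleO hlin
end
end
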